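/- Assume Condition A1 holds for the QVE Mx = a + b(x,x). Define the sequence x₀ = 0, x_{k+1} = M⁻¹(a + b(x_k, x_k)). Then (x_k) is entrywise nondecreasing, it converges to a limit x* ≥ 0 which is a solution of the QVE, and x* ≤ s for every nonnegative solution s of the QVE; in particular the QVE has a minimal nonnegative solution. -/

import Mathlib

open Matrix Filter Topology

/-- The spectral radius of a real square matrix: the supremum of the norms of
its complex eigenvalues. -/
noncomputable def specRad {n : ℕ} (A : Matrix (Fin n) (Fin n) ℝ) : ℝ :=
  sSup {r : ℝ | ∃ μ ∈ spectrum ℂ (A.map (Complex.ofReal)), ‖μ‖ = r}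

/-- An M-matrix: a matrix of the form `s • 1 - P` with `P ≥ 0` and `ρ(P) ≤ s`. -/
def IsMMat {n : ℕ} (A : Matrix (Fin n) (Fin n) ℝ) : Prop :=
  ∃ (s : ℝ) (P : Matrix (Fin n) (Fin n) ℝ),
    (∀ i j, 0 ≤ P i j) ∧ specRad P ≤ s ∧ A = s • (1 : Matrix (Fin n) (Fin n) ℝ) - P

/-- A nonsingular M-matrix: an M-matrix that is invertible. -/
def IsNsMMat {n : ℕ} (A : Matrix (Fin n) (Fin n) ℝ) : Prop :=
  IsMMat A ∧ IsUnit A.det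

/-- A linear map `l : ℝⁿ → ℝᵐ` is weakly positive if `l x ≥ 0` and `l x ≠ 0`
whenever `x ≥ 0` and `x ≠ 0` (all inequalities entrywise). -/
def WeaklyPos {n m : ℕ} (l : (Fin n → ℝ) →ₗ[ℝ] (Fin m → ℝ)) : Prop :=
  ∀ x : Fin n → ℝ, 0 ≤ x → x ≠ 0 → 0 ≤ l x ∧ l x ≠ 0

/-!
A nonsingular M-matrix `M = s • 1 - P` has an entrywise nonnegative inverse: for `ε > 0` the
spectral radius of `P` is below `s + ε`, so by Gelfand's formula `(M + ε • 1)⁻¹` is the Neumann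
series `∑ₖ Pᵏ / (s + ε)ᵏ⁺¹ ≥ 0`, and `M⁻¹` is its limit as `ε → 0⁺`.

Hence `F v = M⁻¹ (a + b v v)` is monotone on the nonnegative cone, so the iterates `xₖ = Fᵏ 0`
increase and stay below every nonnegative fixed point of `F`, that is, below every nonnegative
solution. Condition A1 keeps `l xₖ ≤ z`; weak positivity of `l` gives some `j` with
`l eᵢ j > 0` for each coordinate vector `eᵢ`, which bounds the `i`-th coordinate of `xₖ`
by `z j / l eᵢ j`. The bounded monotone iterates converge, and by continuity of `F` their limit
is a fixed point.
-/

namespace spectrum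

variable {A : Type*} [NormedRing A] [NormedAlgebra ℂ A] [CompleteSpace A]

lemma eventually_norm_pow_le_of_spectralRadius_lt {a : A} {r : ℝ}
    (h : spectralRadius ℂ a < ENNReal.ofReal r) : ∀ᶠ k in atTop, ‖a ^ k‖ ≤ r ^ k := by
  filter_upwards [(pow_norm_pow_one_div_tendsto_nhds_spectralRadius a).eventually_lt_const h,
    eventually_ne_atTop 0] with k hk hk0
  rw [ENNReal.ofReal_lt_ofReal_iff', one_div] at hk
  calc ‖a ^ k‖ = (‖a ^ k‖ ^ (k : ℝ)⁻¹) ^ k := (Real.rpow_inv_natCast_pow (norm_nonneg _) hk0).symm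
    _ ≤ r ^ k := pow_le_pow_left₀ (by positivity) hk.1.le k

end spectrum

lemma specRad_nonneg {n : ℕ} (A : Matrix (Fin n) (Fin n) ℝ) : 0 ≤ specRad A :=
  Real.sSup_nonneg fun _ ⟨μ, _, hμ⟩ => hμ ▸ norm_nonneg μ

section Frobenius

-- The Frobenius norm is chosen because `Matrix.map Complex.ofReal` preserves it.
open scoped Matrix.Norms.Frobenius

lemma spectralRadius_map_ofReal_le_specRad {n : ℕ} (A : Matrix (Fin n) (Fin n) ℝ) :
    spectralRadius ℂ (A.map Complex.ofReal) ≤ ENNReal.ofReal (specRad A) := by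
  have hbdd : BddAbove {r : ℝ | ∃ μ ∈ spectrum ℂ (A.map Complex.ofReal), ‖μ‖ = r} :=
    ((spectrum.isCompact (A.map Complex.ofReal)).image (continuous_norm (E := ℂ))).bddAbove
  refine iSup₂_le fun μ hμ => ?_
  rw [← enorm_eq_nnnorm, ← ofReal_norm]
  exact ENNReal.ofReal_le_ofReal (le_csSup hbdd ⟨μ, hμ, rfl⟩)

lemma summable_pow_smul_of_specRad_lt {n : ℕ} {P : Matrix (Fin n) (Fin n) ℝ} {t : ℝ}
    (ht : specRad P < t) : Summable fun k : ℕ => (t⁻¹ • P) ^ k := by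
  obtain ⟨r, hPr, hrt⟩ := exists_between ht
  have hr : 0 < r := (specRad_nonneg P).trans_lt hPr
  have ht0 : 0 < t := hr.trans hrt
  have hρ : spectralRadius ℂ (P.map Complex.ofReal) < ENNReal.ofReal r :=
    (spectralRadius_map_ofReal_le_specRad P).trans_lt
      ((ENNReal.ofReal_lt_ofReal_iff hr).2 hPr)
  refine .of_norm_bounded_eventually_nat
    (summable_geometric_of_lt_one (by positivity) ((div_lt_one ht0).2 hrt)) ?_
  filter_upwards [spectrum.eventually_norm_pow_le_of_spectralRadius_lt hρ] with k hk
  have hmap : (P ^ k).map Complex.ofReal = P.map Complex.ofReal ^ k :=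
    Matrix.map_pow P Complex.ofRealHom k
  rw [← hmap, frobenius_norm_map_eq _ _ Complex.norm_real] at hk
  rw [smul_pow, norm_smul, norm_pow, norm_inv, Real.norm_of_nonneg ht0.le, div_pow,
    div_eq_inv_mul, inv_pow]
  exact mul_le_mul_of_nonneg_left hk (by positivity)

end Frobenius

lemma inv_apply_nonneg_of_specRad_lt {n : ℕ} {P : Matrix (Fin n) (Fin n) ℝ}
    (hP : ∀ i j, 0 ≤ P i j) {t : ℝ} (ht : specRad P < t) (i j : Fin n) :
    0 ≤ (t • (1 : Matrix (Fin n) (Fin n) ℝ) - P)⁻¹ i j := by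
  have ht0 : 0 < t := (specRad_nonneg P).trans_lt ht
  have hsum := summable_pow_smul_of_specRad_lt ht
  have hinv : (t • (1 : Matrix (Fin n) (Fin n) ℝ) - P)⁻¹ = t⁻¹ • ∑' k, (t⁻¹ • P) ^ k := by
    refine inv_eq_right_inv ?_
    calc (t • (1 : Matrix (Fin n) (Fin n) ℝ) - P) * (t⁻¹ • ∑' k, (t⁻¹ • P) ^ k)
        = (t * t⁻¹) • ((1 - t⁻¹ • P) * ∑' k, (t⁻¹ • P) ^ k) := by
          rw [← smul_mul_smul_comm, smul_sub, smul_smul, mul_inv_cancel₀ ht0.ne', one_smul]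
      _ = 1 := by rw [hsum.one_sub_mul_tsum_pow, mul_inv_cancel₀ ht0.ne', one_smul]
  have hQ : ∀ i j, 0 ≤ (t⁻¹ • P) i j := fun i j => mul_nonneg (inv_nonneg.2 ht0.le) (hP i j)
  rw [hinv, Matrix.smul_apply, smul_eq_mul]
  exact mul_nonneg (inv_nonneg.2 ht0.le) <|
    (Pi.hasSum.1 (Pi.hasSum.1 hsum.hasSum i) j).nonneg fun k => pow_apply_nonneg hQ k i j

lemma IsNsMMat.inv_apply_nonneg {n : ℕ} {M : Matrix (Fin n) (Fin n) ℝ} (hM : IsNsMMat M)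
    (i j : Fin n) : 0 ≤ M⁻¹ i j := by
  obtain ⟨⟨s, P, hP, hPs, rfl⟩, hdet⟩ := hM
  have hinv : ContinuousAt Inv.inv (s • (1 : Matrix (Fin n) (Fin n) ℝ) - P) :=
    continuousAt_matrix_inv _ (hdet.unit_spec ▸ NormedRing.inverse_continuousAt hdet.unit)
  have hshift : Continuous fun ε : ℝ => (s + ε) • (1 : Matrix (Fin n) (Fin n) ℝ) - P := by fun_prop
  have hcont : ContinuousAt
      (fun ε : ℝ => ((s + ε) • (1 : Matrix (Fin n) (Fin n) ℝ) - P)⁻¹ i j) 0 :=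
    (continuous_id.matrix_elem i j).continuousAt.comp
      (hinv.comp_of_eq (hshift.continuousAt (x := 0)) (by simp))
  have hlim := hcont.tendsto.mono_left (nhdsWithin_le_nhds (s := Set.Ioi 0))
  rw [add_zero] at hlim
  refine ge_of_tendsto hlim (eventually_nhdsWithin_of_forall fun ε hε => ?_)
  exact inv_apply_nonneg_of_specRad_lt hP (by linarith [Set.mem_Ioi.1 hε]) i j

lemma Matrix.mulVec_le_mulVec_of_nonneg {m n R : Type*} [Fintype n] [Semiring R] [PartialOrder R]
    [IsOrderedRing R] {A : Matrix m n R} (hA : ∀ i j, 0 ≤ A i j) {u v : n → R} (huv : u ≤ v) :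
    A *ᵥ u ≤ A *ᵥ v :=
  fun i => dotProduct_le_dotProduct_of_nonneg_left huv (hA i)

lemma Matrix.inv_mulVec_eq_iff {n R : Type*} [Fintype n] [DecidableEq n] [CommRing R]
    {A : Matrix n n R} (hA : IsUnit A.det) {u v : n → R} : A⁻¹ *ᵥ u = v ↔ A *ᵥ v = u := by
  constructor <;> rintro rfl
  · rw [mulVec_mulVec, mul_nonsing_inv A hA, one_mulVec]
  · rw [mulVec_mulVec, nonsing_inv_mul A hA, one_mulVec]

lemma LinearMap.monotoneOn_apply_self {R E F : Type*} [CommSemiring R]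
    [AddCommGroup E] [PartialOrder E] [IsOrderedAddMonoid E] [Module R E]
    [AddCommGroup F] [PartialOrder F] [IsOrderedAddMonoid F] [Module R F]
    {b : E →ₗ[R] E →ₗ[R] F} (hb : ∀ x y, 0 ≤ x → 0 ≤ y → 0 ≤ b x y) :
    MonotoneOn (fun x => b x x) (Set.Ici 0) := by
  intro u hu v hv huv
  have hvu : 0 ≤ v - u := sub_nonneg.2 huv
  have hdiff : b v v - b u u = b (v - u) v + b u (v - u) := by
    simp only [map_sub, LinearMap.sub_apply]
    abel
  exact sub_nonneg.1 (hdiff ▸ add_nonneg (hb _ _ hvu hv) (hb _ _ hu hvu))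

lemma LinearMap.continuous_apply_self {𝕜 E F : Type*} [NontriviallyNormedField 𝕜] [CompleteSpace 𝕜]
    [NormedAddCommGroup E] [NormedSpace 𝕜 E] [FiniteDimensional 𝕜 E]
    [NormedAddCommGroup F] [NormedSpace 𝕜 F] (b : E →ₗ[𝕜] E →ₗ[𝕜] F) :
    Continuous fun x => b x x := by
  let b' : E →L[𝕜] E →L[𝕜] F := LinearMap.toContinuousLinearMap
    (LinearMap.toContinuousLinearMap.toLinearMap ∘ₗ b)
  exact b'.continuous₂.comp (continuous_id.prodMk continuous_id)

section RecursiveSequence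

variable {α : Type*} [Preorder α] {s : Set α} {f : α → α} {x : ℕ → α}

lemma monotone_of_succ_eq_of_monotoneOn (hf : MonotoneOn f s) (hxs : ∀ k, x k ∈ s)
    (h01 : x 0 ≤ x 1) (hx : ∀ k, x (k + 1) = f (x k)) : Monotone x := by
  refine monotone_nat_of_le_succ fun k => ?_
  induction k with
  | zero => exact h01
  | succ k ih => rw [hx k, hx (k + 1)]; exact hf (hxs k) (hxs (k + 1)) ih

lemma le_of_succ_eq_of_monotoneOn (hf : MonotoneOn f s) (hxs : ∀ k, x k ∈ s)
    (hx : ∀ k, x (k + 1) = f (x k)) {y : α} (hys : y ∈ s) (hy : f y = y) (h0 : x 0 ≤ y) :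
    ∀ k, x k ≤ y
  | 0 => h0
  | k + 1 => hx k ▸ hy ▸ hf (hxs k) hys (le_of_succ_eq_of_monotoneOn hf hxs hx hys hy h0 k)

end RecursiveSequence

namespace WeaklyPos

variable {n m : ℕ} {l : (Fin n → ℝ) →ₗ[ℝ] (Fin m → ℝ)}

lemma nonneg (hl : WeaklyPos l) {x : Fin n → ℝ} (hx : 0 ≤ x) : 0 ≤ l x := by
  rcases eq_or_ne x 0 with rfl | hx0
  · rw [map_zero]
  · exact (hl x hx hx0).1

lemma mono (hl : WeaklyPos l) {x y : Fin n → ℝ} (hxy : x ≤ y) : l x ≤ l y :=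
  sub_nonneg.1 (map_sub l y x ▸ hl.nonneg (sub_nonneg.2 hxy))

lemma exists_pos_apply_single (hl : WeaklyPos l) (i : Fin n) :
    ∃ j, 0 < l (Pi.single i 1) j := by
  have hsingle : (0 : Fin n → ℝ) ≤ Pi.single i 1 := Pi.single_nonneg.2 zero_le_one
  obtain ⟨hnonneg, hne⟩ := hl _ hsingle (Pi.single_ne_zero_iff.2 one_ne_zero)
  simpa using (Pi.lt_def.1 (lt_of_le_of_ne hnonneg (Ne.symm hne))).2

lemma bddAbove (hl : WeaklyPos l) {S : Set (Fin n → ℝ)} {z : Fin m → ℝ}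
    (hS : ∀ x ∈ S, 0 ≤ x) (hz : ∀ x ∈ S, l x ≤ z) : BddAbove S := by
  choose j hj using hl.exists_pos_apply_single
  refine ⟨fun i => z (j i) / l (Pi.single i 1) (j i), fun x hx i => ?_⟩
  have hsingle : x i • (Pi.single i 1 : Fin n → ℝ) ≤ x := fun k => by
    rcases eq_or_ne k i with rfl | hk
    · simp
    · simpa [hk] using hS x hx k
  rw [le_div_iff₀ (hj i)]
  calc x i * l (Pi.single i 1) (j i) = l (x i • Pi.single i 1) (j i) := by simp
    _ ≤ l x (j i) := hl.mono hsingle (j i)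
    _ ≤ z (j i) := hz x hx (j i)

end WeaklyPos

/-- Under Condition A1, the fixed-point iterates `x₀ = 0`,
`x_{k+1} = M⁻¹(a + b(x_k,x_k))` are entrywise nondecreasing and converge to a limit
`x* ≥ 0` which solves the QVE and is below every nonnegative solution:
the QVE has a minimal nonnegative solution. -/
theorem qve_minimal_solution_of_A1 {n : ℕ} (M : Matrix (Fin n) (Fin n) ℝ)
    (hM : IsNsMMat M) (a : Fin n → ℝ) (ha : 0 ≤ a)
    (b : (Fin n → ℝ) →ₗ[ℝ] (Fin n → ℝ) →ₗ[ℝ] (Fin n → ℝ))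
    (hb : ∀ x y : Fin n → ℝ, 0 ≤ x → 0 ≤ y → 0 ≤ b x y)
    (hA1 : ∃ (m : ℕ) (l : (Fin n → ℝ) →ₗ[ℝ] (Fin m → ℝ)) (z : Fin m → ℝ),
      WeaklyPos l ∧ 0 ≤ z ∧
        ∀ x : Fin n → ℝ, 0 ≤ x → l x ≤ z → l (M⁻¹ *ᵥ (a + b x x)) ≤ z)
    (x : ℕ → Fin n → ℝ) (hx0 : x 0 = 0)
    (hrec : ∀ k, x (k + 1) = M⁻¹ *ᵥ (a + b (x k) (x k))) :
    Monotone x ∧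
      ∃ xs : Fin n → ℝ, Tendsto x atTop (𝓝 xs) ∧ 0 ≤ xs ∧
        M *ᵥ xs = a + b xs xs ∧
        ∀ s : Fin n → ℝ, 0 ≤ s → M *ᵥ s = a + b s s → xs ≤ s := by
  obtain ⟨m, l, z, hl, hz, hlz⟩ := hA1
  set F : (Fin n → ℝ) → Fin n → ℝ := fun v => M⁻¹ *ᵥ (a + b v v)
  have hFmono : MonotoneOn F (Set.Ici 0) := fun u hu v hv huv =>
    mulVec_le_mulVec_of_nonneg hM.inv_apply_nonneg
      (add_le_add_right (b.monotoneOn_apply_self hb hu hv huv) a)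
  have hFnonneg : ∀ v, 0 ≤ v → 0 ≤ F v := fun v hv =>
    mulVec_zero M⁻¹ ▸ mulVec_le_mulVec_of_nonneg hM.inv_apply_nonneg (add_nonneg ha (hb v v hv hv))
  have hxnn : ∀ k, 0 ≤ x k := Nat.rec hx0.ge fun k ih => hrec k ▸ hFnonneg _ ih
  have hmono : Monotone x :=
    monotone_of_succ_eq_of_monotoneOn hFmono hxnn (hx0 ▸ hxnn 1) hrec
  have hlx : ∀ k, l (x k) ≤ z :=
    Nat.rec (by rw [hx0, map_zero]; exact hz) fun k ih => hrec k ▸ hlz _ (hxnn k) ih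
  have hlim := tendsto_atTop_ciSup hmono
    (hl.bddAbove (Set.forall_mem_range.2 hxnn) (Set.forall_mem_range.2 hlx))
  have hFcont : Continuous F :=
    continuous_const.matrix_mulVec (continuous_const.add b.continuous_apply_self)
  have hfix : F (⨆ k, x k) = ⨆ k, x k :=
    tendsto_nhds_unique ((hFcont.tendsto _).comp hlim)
      (((tendsto_add_atTop_iff_nat 1).2 hlim).congr hrec)
  refine ⟨hmono, ⨆ k, x k, hlim, ge_of_tendsto' hlim hxnn, (inv_mulVec_eq_iff hM.2).1 hfix,
    fun s hs hsol => le_of_tendsto' hlim ?_⟩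
  exact le_of_succ_eq_of_monotoneOn hFmono hxnn hrec hs ((inv_mulVec_eq_iff hM.2).2 hsol)
    (hx0 ▸ hs)
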